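/- arXiv:2203.02443 — 6 statements merged into one kernel-verified Lean document; each statement's English description precedes it below -/
import Mathlib

section
/- Let a_0 ≥ a_1 ≥ ... ≥ a_{m-1} > 0. The greedy (circular symmetric) permutation maximises the sum of products of pairs of cyclically adjacent entries: for every permutation σ of {0,...,m-1}, P_2(σ_greedy; a) ≥ P_2(σ; a), where P_2(σ; a) = ∑_{k=0}^{m-1} a_{σ⁻¹(k)} a_{σ⁻¹(k+1 mod m)} and σ_greedy is defined by σ_greedy⁻¹(i) = 2i and σ_greedy⁻¹(m-1-i) = 2i+1 for 0 ≤ i ≤ ⌊m/2⌋ - 1. -/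
/-- The cyclic `r`-product sum `P_r(σ; a) = ∑_{k=0}^{m-1} ∏_{i=0}^{r-1} a_{σ⁻¹((k+i) mod m)}`. -/
noncomputable def cyclicP (m r : ℕ) (σ : Equiv.Perm (Fin m)) (a : Fin m → ℝ) : ℝ :=
  ∑ k : Fin m, ∏ i ∈ Finset.range r,
    a (σ.symm ⟨((k : ℕ) + i) % m, Nat.mod_lt _ k.pos⟩)

/-- `g` is the greedy (circular symmetric) permutation: `g⁻¹(i) = 2i` and
`g⁻¹(m-1-i) = 2i+1` for `0 ≤ i ≤ ⌊m/2⌋ - 1`. -/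
def IsGreedy {m : ℕ} (g : Equiv.Perm (Fin m)) : Prop :=
  ∀ i : Fin m,
    ((i : ℕ) < m / 2 → ((g.symm i : ℕ)) = 2 * (i : ℕ)) ∧
    (m - 1 - (i : ℕ) < m / 2 → ((g.symm i : ℕ)) = 2 * (m - 1 - (i : ℕ)) + 1)

/-!
Write `a i = ∑_{s ≥ i} d s` with `d s = a s - a (s + 1) ≥ 0` (and `a m = 0`). Then
`P₂(σ; a) = ∑_{s,t} d s * d t * N_σ(s, t)`, where, for the sets `S ⊆ T` of positions holding the
`s + 1` resp. `t + 1` largest entries, `N_σ(s, t)` counts the positions `k ∈ S` with `k + 1 ∈ T`.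
By symmetry it suffices to show that `N_σ(s, t) + N_σ(t, s)` is largest for the greedy arrangement.
This sum is at most `2 |S|`, and it equals `e(S) + e(T) - e(T \ S)`, where `e(X)` counts the cyclic
edges inside `X`; a proper nonempty `X` has `e(X) ≤ |X| - 1`, so the sum is at most `s + t` unless
`T` is everything. The greedy arrangement puts the top entries on an arc that grows alternately to
the right and to the left, so `S` has at most one edge leaving `T` on either side, and none on a side
where `T` is longer than `S`; this attains `min (s + t) (2 s + 2)`.
-/

open Finset

variable {m : ℕ}

def topPositions (σ : Equiv.Perm (Fin m)) (s : ℕ) : Finset (Fin m) := {k | (σ.symm k : ℕ) ≤ s}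

theorem card_topPositions (σ : Equiv.Perm (Fin m)) {s : ℕ} (hs : s < m) :
    #(topPositions σ s) = s + 1 := by
  rw [topPositions, card_equiv σ.symm (t := {i : Fin m | (i : ℕ) < s + 1}) (by simp),
    Fin.card_filter_val_lt]
  omega

theorem topPositions_mono (σ : Equiv.Perm (Fin m)) {s t : ℕ} (hst : s ≤ t) :
    topPositions σ s ⊆ topPositions σ t :=
  fun k hk => by simp only [topPositions, mem_filter, mem_univ, true_and] at hk ⊢; omega

theorem topPositions_eq_univ (σ : Equiv.Perm (Fin m)) {s : ℕ} (hs : m ≤ s + 1) :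
    topPositions σ s = univ :=
  filter_true_of_mem fun k _ => by omega

theorem IsGreedy.val_symm_apply {g : Equiv.Perm (Fin m)} (hg : IsGreedy g) (k : Fin m) :
    (g.symm k : ℕ) = if 2 * (k : ℕ) < m then 2 * (k : ℕ) else 2 * (m - 1 - k) + 1 := by
  have hoff : ∀ j : Fin m, 2 * (j : ℕ) + 1 ≠ m →
      (g.symm j : ℕ) = if 2 * (j : ℕ) < m then 2 * (j : ℕ) else 2 * (m - 1 - j) + 1 := by
    intro j hj
    split_ifs
    · exact (hg j).1 (by omega)
    · exact (hg j).2 (by omega)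
  by_cases hk : 2 * (k : ℕ) + 1 = m
  · -- `IsGreedy` leaves the middle position of an odd cycle free: it gets the rank left over.
    rw [if_pos (by omega)]
    by_contra hv
    obtain ⟨j, hjk, hjv⟩ : ∃ j : Fin m, 2 * (j : ℕ) + 1 ≠ m ∧ (g.symm j : ℕ) = g.symm k := by
      have hvm := (g.symm k).isLt
      rcases Nat.even_or_odd' (g.symm k : ℕ) with ⟨c, hc | hc⟩
      · refine ⟨⟨c, by omega⟩, by simp only; omega, ?_⟩
        rw [hoff _ (by simp only; omega)]
        split_ifs <;> simp only at * <;> omega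
      · refine ⟨⟨m - 1 - c, by omega⟩, by simp only; omega, ?_⟩
        rw [hoff _ (by simp only; omega)]
        split_ifs <;> simp only at * <;> omega
    exact hjk (g.symm.injective (Fin.ext hjv) ▸ hk)
  · exact hoff k hk

theorem IsGreedy.mem_topPositions_iff {g : Equiv.Perm (Fin m)} (hg : IsGreedy g) {k : Fin m}
    {s : ℕ} : k ∈ topPositions g s ↔ 2 * (k : ℕ) ≤ s ∨ 2 * (m - 1 - k) < s := by
  have := k.isLt
  simp only [topPositions, mem_filter, mem_univ, true_and, hg.val_symm_apply]
  split_ifs <;> omega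

noncomputable def zeroExtend (a : Fin m → ℝ) (s : ℕ) : ℝ := if h : s < m then a ⟨s, h⟩ else 0

noncomputable def gap (a : Fin m → ℝ) (s : ℕ) : ℝ := zeroExtend a s - zeroExtend a (s + 1)

theorem gap_nonneg {a : Fin m → ℝ} (ha : ∀ i, 0 ≤ a i) (hdec : Antitone a) (s : ℕ) :
    0 ≤ gap a s := by
  unfold gap zeroExtend
  split_ifs
  · exact sub_nonneg.2 (hdec (Fin.mk_le_mk.2 s.le_succ))
  · simpa using ha _
  · omega
  · simp

theorem sum_ite_le_gap (a : Fin m → ℝ) (p : Fin m) :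
    ∑ s ∈ range m, (if (p : ℕ) ≤ s then gap a s else 0) = a p := by
  rw [← sum_filter, show {s ∈ range m | (p : ℕ) ≤ s} = Ico (p : ℕ) m by ext; simp; omega]
  simp only [gap, ← neg_sub (zeroExtend a (_ + 1)), sum_neg_distrib, sum_Ico_sub _ p.isLt.le]
  simp [zeroExtend]

theorem sum_sum_mul_le_of_add_le {ι : Type*} (I : Finset ι) {c : ι → ℝ} (hc : ∀ i ∈ I, 0 ≤ c i)
    {N M : ι → ι → ℝ} (h : ∀ i ∈ I, ∀ j ∈ I, N i j + N j i ≤ M i j + M j i) :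
    ∑ i ∈ I, ∑ j ∈ I, c i * c j * N i j ≤ ∑ i ∈ I, ∑ j ∈ I, c i * c j * M i j := by
  have hsymm : ∀ F : ι → ι → ℝ, 2 * ∑ i ∈ I, ∑ j ∈ I, c i * c j * F i j =
      ∑ i ∈ I, ∑ j ∈ I, c i * c j * (F i j + F j i) := by
    intro F
    rw [two_mul]
    nth_rw 2 [sum_comm]
    rw [← sum_add_distrib]
    refine sum_congr rfl fun i _ => ?_
    rw [← sum_add_distrib]
    exact sum_congr rfl fun j _ => by ring
  have := sum_le_sum fun i hi => sum_le_sum fun j hj =>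
    mul_le_mul_of_nonneg_left (h i hi j hj) (mul_nonneg (hc i hi) (hc j hj))
  linarith [hsymm N, hsymm M]

section

variable [NeZero m]

theorem Fin.val_add_one_ite (k : Fin m) :
    ((k + 1 : Fin m) : ℕ) = if (k : ℕ) + 1 < m then (k : ℕ) + 1 else 0 := by
  split_ifs with h
  · exact Fin.val_add_one_of_lt' h
  · rw [Fin.val_add, Fin.val_one', Nat.add_mod_mod, show (k : ℕ) + 1 = m by omega, Nat.mod_self]

def adjCount (A B : Finset (Fin m)) : ℕ := #{k ∈ A | k + 1 ∈ B}

theorem adjCount_eq_card_filter_univ (A B : Finset (Fin m)) :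
    adjCount A B = #{k | k ∈ A ∧ k + 1 ∈ B} := by
  rw [adjCount, ← filter_filter, filter_univ_mem]

theorem card_filter_add_one_mem (B : Finset (Fin m)) : #{k | k + 1 ∈ B} = #B :=
  card_equiv (Equiv.addRight 1) (by simp)

theorem adjCount_add_adjCount_add_adjCount_sdiff {A B : Finset (Fin m)} (h : A ⊆ B) :
    adjCount A B + adjCount B A + adjCount (B \ A) (B \ A) = adjCount A A + adjCount B B := by
  simp only [adjCount_eq_card_filter_univ, card_filter, ← sum_add_distrib]
  refine sum_congr rfl fun k _ => ?_
  have := @h k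
  have := @h (k + 1)
  by_cases k ∈ A <;> by_cases k ∈ B <;> by_cases k + 1 ∈ A <;> by_cases k + 1 ∈ B <;> simp_all

open Fin.NatCast in
theorem exists_mem_add_one_notMem {A : Finset (Fin m)} (hne : A.Nonempty) (hA : A ≠ univ) :
    ∃ k ∈ A, k + 1 ∉ A := by
  by_contra! hclosed
  obtain ⟨x, hx⟩ := hne
  have hadd : ∀ n : ℕ, x + (n : Fin m) ∈ A := by
    intro n
    induction n with
    | zero => simpa using hx
    | succ n ih => simpa [add_assoc] using hclosed _ ih
  refine hA (eq_univ_of_forall fun y => ?_)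
  simpa using hadd (y - x : Fin m).val

theorem adjCount_le_card_left (A B : Finset (Fin m)) : adjCount A B ≤ #A :=
  card_filter_le _ _

theorem adjCount_add_card_exits (A B : Finset (Fin m)) :
    adjCount A B + #{k ∈ A | k + 1 ∉ B} = #A :=
  card_filter_add_card_filter_not _

theorem adjCount_add_card_entries (A B : Finset (Fin m)) :
    adjCount A B + #{k | k ∉ A ∧ k + 1 ∈ B} = #B := by
  rw [adjCount_eq_card_filter_univ, ← card_filter_add_one_mem B,
    ← card_filter_add_card_filter_not (s := {k | k + 1 ∈ B}) (· ∈ A), filter_filter, filter_filter]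
  simp only [and_comm]

theorem adjCount_le_card_right (A B : Finset (Fin m)) : adjCount A B ≤ #B := by
  rw [← adjCount_add_card_entries A B]
  exact Nat.le_add_right _ _

theorem adjCount_univ_right (A : Finset (Fin m)) : adjCount A univ = #A := by
  simp [adjCount]

theorem adjCount_univ_left (B : Finset (Fin m)) : adjCount univ B = #B := by
  simpa using adjCount_add_card_entries univ B

theorem adjCount_self_lt_card {A : Finset (Fin m)} (hne : A.Nonempty) (hA : A ≠ univ) :
    adjCount A A < #A := by
  obtain ⟨k, hk, hk'⟩ := exists_mem_add_one_notMem hne hA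
  have hexit : 0 < #{k ∈ A | k + 1 ∉ A} := card_pos.2 ⟨k, mem_filter.2 ⟨hk, hk'⟩⟩
  have := adjCount_add_card_exits A A
  omega

theorem adjCount_add_adjCount_add_two_le {A B : Finset (Fin m)} (h : A ⊆ B) (hA : A.Nonempty)
    (hB : B ≠ univ) : adjCount A B + adjCount B A + 2 ≤ #A + #B := by
  have := adjCount_add_adjCount_add_adjCount_sdiff h
  have := adjCount_self_lt_card hA fun hAu => hB (univ_subset_iff.1 (hAu ▸ h))
  have := adjCount_self_lt_card (hA.mono h) hB
  omega

theorem IsGreedy.card_exits_le {g : Equiv.Perm (Fin m)} (hg : IsGreedy g) {s t : ℕ}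
    (hst : s ≤ t) :
    #{k ∈ topPositions g s | k + 1 ∉ topPositions g t} ≤ if s / 2 < t / 2 then 0 else 1 := by
  split_ifs with h
  · simp only [nonpos_iff_eq_zero, card_eq_zero, filter_eq_empty_iff, not_not,
      hg.mem_topPositions_iff, Fin.val_add_one_ite]
    intro k hk
    have := k.isLt
    split_ifs <;> omega
  · simp only [card_le_one, mem_filter, hg.mem_topPositions_iff, Fin.val_add_one_ite]
    intro k hk j hj
    have := k.isLt
    have := j.isLt
    ext
    split_ifs at hk hj <;> omega

theorem IsGreedy.card_entries_le {g : Equiv.Perm (Fin m)} (hg : IsGreedy g) {s t : ℕ}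
    (hst : s ≤ t) :
    #{k | k ∉ topPositions g t ∧ k + 1 ∈ topPositions g s} ≤
      if (s + 1) / 2 < (t + 1) / 2 then 0 else 1 := by
  split_ifs with h
  · simp only [nonpos_iff_eq_zero, card_eq_zero, filter_eq_empty_iff, not_and,
      hg.mem_topPositions_iff, Fin.val_add_one_ite]
    intro k _ hk
    have := k.isLt
    split_ifs <;> omega
  · simp only [card_le_one, mem_filter, mem_univ, true_and, hg.mem_topPositions_iff,
      Fin.val_add_one_ite]
    intro k hk j hj
    have := k.isLt
    have := j.isLt
    ext
    split_ifs at hk hj <;> omega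

theorem IsGreedy.min_le_adjCount_add_adjCount {g : Equiv.Perm (Fin m)} (hg : IsGreedy g)
    {s t : ℕ} (hst : s ≤ t) (ht : t < m) :
    min (s + t) (2 * s + 2) ≤ adjCount (topPositions g s) (topPositions g t) +
      adjCount (topPositions g t) (topPositions g s) := by
  have := card_topPositions g (hst.trans_lt ht)
  have := adjCount_add_card_exits (topPositions g s) (topPositions g t)
  have := adjCount_add_card_entries (topPositions g t) (topPositions g s)
  have hexits := hg.card_exits_le hst
  have hentries := hg.card_entries_le hst
  split_ifs at hexits hentries <;> omega

theorem adjCount_topPositions_add_le (σ : Equiv.Perm (Fin m)) {s t : ℕ} (hst : s ≤ t)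
    (ht : t + 1 < m) :
    adjCount (topPositions σ s) (topPositions σ t) + adjCount (topPositions σ t) (topPositions σ s)
      ≤ min (s + t) (2 * s + 2) := by
  have hS := card_topPositions σ (by omega : s < m)
  have hT := card_topPositions σ (by omega : t < m)
  have := adjCount_add_adjCount_add_two_le (topPositions_mono σ hst) (card_pos.1 (by omega))
    (fun h => by simp [h] at hT; omega)
  have := adjCount_le_card_left (topPositions σ s) (topPositions σ t)
  have := adjCount_le_card_right (topPositions σ t) (topPositions σ s)
  omega

theorem adjCount_topPositions_last (σ : Equiv.Perm (Fin m)) {s : ℕ} (hs : s < m) :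
    adjCount (topPositions σ s) (topPositions σ (m - 1)) +
      adjCount (topPositions σ (m - 1)) (topPositions σ s) = 2 * (s + 1) := by
  rw [topPositions_eq_univ σ (s := m - 1) (by omega), adjCount_univ_right, adjCount_univ_left,
    card_topPositions σ hs]
  ring

theorem IsGreedy.adjCount_add_adjCount_le {g : Equiv.Perm (Fin m)} (hg : IsGreedy g)
    (σ : Equiv.Perm (Fin m)) {s t : ℕ} (hs : s < m) (ht : t < m) :
    adjCount (topPositions σ s) (topPositions σ t) + adjCount (topPositions σ t) (topPositions σ s)
      ≤ adjCount (topPositions g s) (topPositions g t) +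
        adjCount (topPositions g t) (topPositions g s) := by
  wlog hst : s ≤ t generalizing s t
  · have := this ht hs (by omega)
    omega
  rcases (by omega : t + 1 < m ∨ t = m - 1) with ht' | rfl
  · exact (adjCount_topPositions_add_le σ hst ht').trans (hg.min_le_adjCount_add_adjCount hst ht)
  · rw [adjCount_topPositions_last σ hs, adjCount_topPositions_last g hs]

theorem cyclicP_two (σ : Equiv.Perm (Fin m)) (a : Fin m → ℝ) :
    cyclicP m 2 σ a = ∑ k, a (σ.symm k) * a (σ.symm (k + 1)) := by
  refine sum_congr rfl fun k _ => ?_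
  rw [prod_range_succ, prod_range_one]
  congr 3 <;> ext <;> simp [Fin.val_add, Nat.mod_eq_of_lt k.isLt]

theorem sum_mul_succ_eq_sum_gap (σ : Equiv.Perm (Fin m)) (a : Fin m → ℝ) :
    ∑ k, a (σ.symm k) * a (σ.symm (k + 1)) = ∑ s ∈ range m, ∑ t ∈ range m,
      gap a s * gap a t * adjCount (topPositions σ s) (topPositions σ t) := by
  have hlayer : ∀ k, a (σ.symm k) =
      ∑ s ∈ range m, if k ∈ topPositions σ s then gap a s else 0 := by
    intro k
    simp [← sum_ite_le_gap a (σ.symm k), topPositions]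
  simp_rw [hlayer, sum_mul_sum, ite_zero_mul_ite_zero]
  rw [sum_comm]
  refine sum_congr rfl fun s _ => ?_
  rw [sum_comm]
  refine sum_congr rfl fun t _ => ?_
  rw [sum_ite, sum_const_zero, add_zero, sum_const, nsmul_eq_mul, adjCount_eq_card_filter_univ,
    mul_comm]

end

theorem stmt_3_general (m : ℕ) (a : Fin m → ℝ) (ha : ∀ i, 0 < a i)
    (hdec : Antitone a) (g : Equiv.Perm (Fin m)) (hg : IsGreedy g)
    (σ : Equiv.Perm (Fin m)) :
    cyclicP m 2 σ a ≤ cyclicP m 2 g a := by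
  rcases Nat.eq_zero_or_pos m with rfl | hm
  · simp [cyclicP]
  have : NeZero m := ⟨hm.ne'⟩
  rw [cyclicP_two, cyclicP_two, sum_mul_succ_eq_sum_gap, sum_mul_succ_eq_sum_gap]
  refine sum_sum_mul_le_of_add_le _ (fun s _ => gap_nonneg (fun i => (ha i).le) hdec s)
    fun s hs t ht => ?_
  exact_mod_cast hg.adjCount_add_adjCount_le σ (mem_range.1 hs) (mem_range.1 ht)

/-- The greedy permutation maximises the sum of products of cyclically adjacent pairs. -/
theorem stmt_3 (m : ℕ) (hm : 2 ≤ m) (a : Fin m → ℝ) (ha : ∀ i, 0 < a i)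
    (hdec : Antitone a) (g : Equiv.Perm (Fin m)) (hg : IsGreedy g)
    (σ : Equiv.Perm (Fin m)) :
    cyclicP m 2 σ a ≤ cyclicP m 2 g a :=
  stmt_3_general m a ha hdec g hg σ
end

section
/- Let a_0 ≥ a_1 ≥ ... ≥ a_{m-1} > 0. The greedy (circular symmetric) permutation maximises the sum of products of triples of cyclically consecutive entries: for every permutation σ of {0,...,m-1}, P_3(σ_greedy; a) ≥ P_3(σ; a), where P_3(σ; a) = ∑_{k=0}^{m-1} a_{σ⁻¹(k)} a_{σ⁻¹(k+1)} a_{σ⁻¹(k+2)} (indices mod m). -/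
/-!
Put `y = log a`, an antitone sequence, so that `P₃(ρ; a) = ∑ₖ exp Vρ(k)` where `Vρ(k)` is the sum
of `y` over the labels in the window `{k, k+1, k+2}`. The weight of the label `l` in a sum of `Vρ`
over a set `T` of windows is the number of windows of `T` containing the position of `l`, so
partial sums of these weights over the `j` largest labels count incidences between `T` and a set
of `j` positions. On a cycle, `t` windows and `j` positions have at most `incidenceBound m t j`
incidences, and the `t` windows of the greedy arrangement centred at its `t` largest labels attain
this for every `j` at once. Abel summation against `y` then shows that these greedy windows beat
any `t` windows of `σ`: the sorted window sums of `σ` are majorized by those of the greedy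
arrangement, and Karamata's inequality for `exp` (again by Abel summation, after the tangent-line
bound) finishes the proof.
-/

open Finset
open scoped Fin.NatCast Fin.CommRing

namespace CyclicWindow

section Abel

theorem sum_range_mul_nonneg_of_prefix_nonneg {n : ℕ} {c d : ℕ → ℝ}
    (hc : ∀ i, i + 1 < n → c (i + 1) ≤ c i) (hd : ∀ j ≤ n, 0 ≤ ∑ i ∈ range j, d i)
    (htot : ∑ i ∈ range n, d i = 0) : 0 ≤ ∑ i ∈ range n, c i * d i := by
  have hparts := sum_range_by_parts c d n
  simp only [smul_eq_mul] at hparts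
  rw [hparts, htot, mul_zero, zero_sub, neg_nonneg]
  refine sum_nonpos fun i hi => mul_nonpos_of_nonpos_of_nonneg ?_ (hd _ ?_)
  · have := mem_range.mp hi
    exact sub_nonpos.mpr (hc i (by omega))
  · have := mem_range.mp hi
    omega

def below {m : ℕ} (j : ℕ) : Finset (Fin m) := {i | (i : ℕ) < j}

theorem mem_image_below_iff {m j : ℕ} {ρ : Equiv.Perm (Fin m)} {p : Fin m} :
    p ∈ (below j).image ρ ↔ (ρ.symm p : ℕ) < j := by
  simp [below, ← Equiv.eq_symm_apply]

variable {m : ℕ} [NeZero m]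

theorem sum_below {M : Type*} [AddCommMonoid M] (f : Fin m → M) {j : ℕ} (hj : j ≤ m) :
    ∑ i ∈ below j, f i = ∑ i ∈ range j, f i := by
  have hcast : ∀ i : Fin m, f i = f ((i : ℕ) : Fin m) := fun i => by rw [Fin.cast_val_eq_self]
  rw [below, sum_filter, sum_congr rfl fun i _ => by rw [hcast i],
    Fin.sum_univ_eq_sum_range (fun i => if i < j then f i else 0), ← sum_filter]
  congr 1
  ext i
  simp only [mem_filter, mem_range]
  omega

theorem card_below {j : ℕ} (hj : j ≤ m) : #(below j : Finset (Fin m)) = j := by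
  rw [card_eq_sum_ones, sum_below _ hj, sum_const, card_range, smul_eq_mul, mul_one]

theorem sum_mul_le_sum_mul_of_prefix_le {c : Fin m → ℝ} (hc : Antitone c) {w w' : Fin m → ℝ}
    (hpre : ∀ j ≤ m, ∑ i ∈ below j, w i ≤ ∑ i ∈ below j, w' i) (htot : ∑ i, w i = ∑ i, w' i) :
    ∑ i, w i * c i ≤ ∑ i, w' i * c i := by
  have key : 0 ≤ ∑ i ∈ range m, c i * (w' i - w i) := by
    refine sum_range_mul_nonneg_of_prefix_nonneg (fun i hi => hc ?_) (fun j hj => ?_) ?_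
    · rw [Fin.le_def, Fin.val_cast_of_lt (by omega), Fin.val_cast_of_lt hi]
      omega
    · rw [sum_sub_distrib, ← sum_below _ hj, ← sum_below _ hj, sub_nonneg]
      exact hpre j hj
    · rw [sum_sub_distrib, ← Fin.sum_univ_eq_sum_range, ← Fin.sum_univ_eq_sum_range]
      simp only [Fin.cast_val_eq_self]
      rw [htot, sub_self]
  rw [← Fin.sum_univ_eq_sum_range (fun i => c i * (w' i - w i))] at key
  simp only [Fin.cast_val_eq_self, mul_sub] at key
  rw [sum_sub_distrib, sub_nonneg] at key
  simpa only [mul_comm] using key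

theorem sum_exp_le_sum_exp_of_prefix_le {v u : Fin m → ℝ} (hv : Antitone v)
    (hpre : ∀ j ≤ m, ∑ i ∈ below j, v i ≤ ∑ i ∈ below j, u i) (htot : ∑ i, v i = ∑ i, u i) :
    ∑ i, Real.exp (v i) ≤ ∑ i, Real.exp (u i) := by
  have tangent : ∀ i, (u i - v i) * Real.exp (v i) ≤ Real.exp (u i) - Real.exp (v i) := by
    intro i
    have h := mul_le_mul_of_nonneg_right (Real.add_one_le_exp (u i - v i)) (Real.exp_pos (v i)).le
    rwa [← Real.exp_add, sub_add_cancel, add_one_mul, ← le_sub_iff_add_le] at h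
  have := sum_mul_le_sum_mul_of_prefix_le (fun _ _ h => Real.exp_le_exp.mpr (hv h)) hpre htot
  have := sum_le_sum fun i (_ : i ∈ univ) => tangent i
  simp only [sub_mul, sum_sub_distrib] at this
  linarith

end Abel

section Windows

variable {m : ℕ} [NeZero m]

def window (k : Fin m) : Finset (Fin m) := {k, k + 1, k + 2}

theorem mem_window_iff_mem_window_sub_two {k v : Fin m} :
    v ∈ window k ↔ k ∈ window (v - 2) := by
  simp only [window, mem_insert, mem_singleton]
  constructor <;> rintro (rfl | rfl | rfl)
  exacts [Or.inr (Or.inr (by ring)), Or.inr (Or.inl (by ring)), Or.inl (by ring),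
    Or.inr (Or.inr (by ring)), Or.inr (Or.inl (by ring)), Or.inl (by ring)]

theorem sum_window (hm : 3 ≤ m) {M : Type*} [AddCommMonoid M] (f : Fin m → M) (k : Fin m) :
    ∑ p ∈ window k, f p = f k + f (k + 1) + f (k + 2) := by
  have h1 : (1 : Fin m) ≠ 0 := by simp [Fin.ext_iff, Nat.mod_eq_of_lt (show 1 < m by omega)]
  have h2 : (2 : Fin m) ≠ 0 := by simp [Fin.ext_iff, Nat.mod_eq_of_lt (show 2 < m by omega)]
  have h12 : (1 : Fin m) ≠ 2 := fun h => h1 (by linear_combination -h)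
  rw [window, sum_insert, sum_insert, sum_singleton, add_assoc]
  · simpa using h12
  · simp [h1, h2]

theorem card_window (hm : 3 ≤ m) (k : Fin m) : #(window k) = 3 := by
  rw [card_eq_sum_ones, sum_window hm]

theorem exists_mem_add_one_notMem {s : Finset (Fin m)} (hne : s.Nonempty) (hs : s ≠ univ) :
    ∃ x ∈ s, x + 1 ∉ s := by
  by_contra! hclosed
  obtain ⟨x, hx⟩ := hne
  have hshift : ∀ n : ℕ, x + n ∈ s := by
    intro n
    induction n with
    | zero => simpa using hx
    | succ n ih => simpa [add_assoc] using hclosed _ ih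
  refine hs (eq_univ_of_forall fun z => ?_)
  simpa using hshift (z - x).val

theorem card_filter_window_subset_add_two_le {U : Finset (Fin m)} (hU : U ≠ univ)
    (hfull : (univ.filter fun k => window k ⊆ U).Nonempty) :
    #(univ.filter fun k => window k ⊆ U) + 2 ≤ #U := by
  set K := univ.filter fun k => window k ⊆ U
  have hK : ∀ k ∈ K, k ∈ U ∧ k + 1 ∈ U ∧ k + 2 ∈ U := fun k hk => by
    have := (mem_filter.mp hk).2
    exact ⟨this (by simp [window]), this (by simp [window]), this (by simp [window])⟩
  have hKU : K ≠ univ := fun h => hU (eq_univ_of_forall fun k => (hK k (h ▸ mem_univ k)).1)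
  -- `K ⊊ K ∪ (K + 1) ⊆ E ⊊ U`
  set E := U.filter fun u => u + 1 ∈ U
  have hgrow : #K < #(K ∪ K.image (· + 1)) := by
    obtain ⟨x, hx, hx1⟩ := exists_mem_add_one_notMem hfull hKU
    refine card_lt_card (ssubset_iff_of_subset subset_union_left |>.mpr ⟨x + 1, ?_, hx1⟩)
    exact mem_union_right _ (mem_image_of_mem _ hx)
  have hsub : K ∪ K.image (· + 1) ⊆ E := by
    intro x hx
    rcases mem_union.mp hx with hx | hx
    · exact mem_filter.mpr ⟨(hK x hx).1, (hK x hx).2.1⟩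
    · obtain ⟨k, hk, rfl⟩ := mem_image.mp hx
      refine mem_filter.mpr ⟨(hK k hk).2.1, ?_⟩
      rw [add_assoc, one_add_one_eq_two]
      exact (hK k hk).2.2
  have hEU : #E < #U := by
    obtain ⟨k, hk⟩ := hfull
    obtain ⟨x, hx, hx1⟩ := exists_mem_add_one_notMem ⟨k, (hK k hk).1⟩ hU
    exact card_lt_card (filter_ssubset.mpr ⟨x, hx, hx1⟩)
  have := card_le_card hsub
  omega

end Windows

section Incidence

def incidenceBound (m t j : ℕ) : ℕ :=
  if t < m ∧ j < m then min (min (3 * t) (3 * j)) (min (2 * t + j - 2) (2 * j + t - 2))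
  else 3 * min t j

variable {m : ℕ} [NeZero m]

def incidence (S U : Finset (Fin m)) : ℕ := ∑ k ∈ S, #(window k ∩ U)

theorem card_window_inter_eq_sum (k : Fin m) (U : Finset (Fin m)) :
    #(window k ∩ U) = ∑ v ∈ U, if v ∈ window k then 1 else 0 := by
  rw [inter_comm, ← filter_mem_eq_inter, card_filter]

theorem incidence_eq_incidence_image_sub_two (S U : Finset (Fin m)) :
    incidence S U = incidence (U.image (· - 2)) S := by
  rw [incidence, incidence, sum_image fun _ _ _ _ => sub_left_inj.mp]
  simp only [card_window_inter_eq_sum, ← mem_window_iff_mem_window_sub_two]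
  exact sum_comm

theorem sum_incidence_singleton (S U : Finset (Fin m)) :
    ∑ v ∈ U, incidence S {v} = incidence S U := by
  simp only [incidence, card_window_inter_eq_sum, sum_singleton]
  exact sum_comm

theorem incidence_le_card_mul_card (S U : Finset (Fin m)) : incidence S U ≤ #S * #U :=
  (sum_le_sum fun _ _ => card_le_card inter_subset_right).trans_eq (by rw [sum_const, smul_eq_mul])

theorem incidence_le_three_mul_card_left (hm : 3 ≤ m) (S U : Finset (Fin m)) :
    incidence S U ≤ 3 * #S :=
  (sum_le_sum fun k _ => (card_le_card inter_subset_left).trans_eq (card_window hm k)).trans_eq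
    (by rw [sum_const, smul_eq_mul, mul_comm])

theorem incidence_le_three_mul_card_right (hm : 3 ≤ m) (S U : Finset (Fin m)) :
    incidence S U ≤ 3 * #U := by
  rw [incidence_eq_incidence_image_sub_two]
  exact (incidence_le_three_mul_card_left hm _ _).trans (by grw [card_image_le])

theorem incidence_univ (hm : 3 ≤ m) (S : Finset (Fin m)) : incidence S univ = 3 * #S := by
  simp only [incidence, inter_univ, card_window hm, sum_const, smul_eq_mul, mul_comm]

theorem incidence_le_two_mul_card_add_card_filter (hm : 3 ≤ m) (S U : Finset (Fin m)) :
    incidence S U ≤ 2 * #S + #(S.filter fun k => window k ⊆ U) := by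
  rw [card_filter, mul_comm, ← smul_eq_mul, ← sum_const, ← sum_add_distrib]
  refine sum_le_sum fun k _ => ?_
  by_cases hk : window k ⊆ U
  · simp only [hk, if_true]
    exact (card_le_card inter_subset_left).trans (card_window hm k).le
  · simp only [hk, if_false, add_zero]
    have := card_lt_card (s := window k ∩ U)
      ⟨inter_subset_left, fun h => hk (h.trans inter_subset_right)⟩
    rw [card_window hm] at this
    omega

theorem incidence_add_two_le (hm : 3 ≤ m) {S U : Finset (Fin m)} (hS : S.Nonempty)
    (hU : U ≠ univ) : incidence S U + 2 ≤ 2 * #S + #U := by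
  have hsplit := incidence_le_two_mul_card_add_card_filter hm S U
  have hS1 : 1 ≤ #S := card_pos.mpr hS
  rcases (S.filter fun k => window k ⊆ U).eq_empty_or_nonempty with hF | hF
  · rw [hF, card_empty] at hsplit
    by_cases hU2 : 2 ≤ #U
    · omega
    · have := incidence_le_card_mul_card S U
      obtain hU' | hU' : #U = 0 ∨ #U = 1 := by omega
      all_goals rw [hU'] at this ⊢; omega
  · have hsub : (S.filter fun k => window k ⊆ U) ⊆ univ.filter fun k => window k ⊆ U :=
      filter_subset_filter _ (subset_univ S)
    have := card_filter_window_subset_add_two_le hU (hF.mono hsub)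
    have := card_le_card hsub
    omega

theorem incidence_add_two_le' (hm : 3 ≤ m) {S U : Finset (Fin m)} (hU : U.Nonempty)
    (hS : S ≠ univ) : incidence S U + 2 ≤ 2 * #U + #S := by
  rw [incidence_eq_incidence_image_sub_two]
  have := incidence_add_two_le hm (hU.image (· - 2)) hS
  rwa [card_image_of_injective _ fun _ _ => sub_left_inj.mp] at this

theorem incidence_le_incidenceBound (hm : 3 ≤ m) (S U : Finset (Fin m)) :
    incidence S U ≤ incidenceBound m #S #U := by
  have hleft := incidence_le_three_mul_card_left hm S U
  have hright := incidence_le_three_mul_card_right hm S U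
  unfold incidenceBound
  split_ifs with h
  · have hprod := incidence_le_card_mul_card S U
    rcases S.eq_empty_or_nonempty with rfl | hS
    · simp_all
    rcases U.eq_empty_or_nonempty with rfl | hU
    · simp_all
    have hne : ∀ V : Finset (Fin m), #V < m → V ≠ univ := fun V hV hV' => by
      simp [hV'] at hV
    have := incidence_add_two_le hm hS (hne U h.2)
    have := incidence_add_two_le' hm hU (hne S h.1)
    omega
  · omega

end Incidence

section Greedy

-- The greedy arrangement reads `… 5 3 1 0 2 4 …` around the cycle, so the neighbours of the
-- label `l` are `l - 2` and `l + 2`, except that `0, 1` and `m - 2, m - 1` are adjacent.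
def lowerNeighbour (l : ℕ) : ℕ := if 2 ≤ l then l - 2 else 1 - l

def upperNeighbour (m l : ℕ) : ℕ := if l + 2 < m then l + 2 else 2 * m - 3 - l

theorem incidenceBound_succ {m l j : ℕ} (hm : 3 ≤ m) (hl : l < m) (hj : j ≤ m) :
    incidenceBound m (l + 1) j = incidenceBound m l j + ((if lowerNeighbour l < j then 1 else 0) +
      (if l < j then 1 else 0) + (if upperNeighbour m l < j then 1 else 0)) := by
  unfold incidenceBound lowerNeighbour upperNeighbour
  grind

theorem _root_.IsGreedy.val_symm_apply_s4 {m : ℕ} {g : Equiv.Perm (Fin m)} (hg : IsGreedy g)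
    (p : Fin m) :
    (g.symm p : ℕ) = if 2 * (p : ℕ) < m then 2 * (p : ℕ) else 2 * (m - 1 - (p : ℕ)) + 1 := by
  have hp := p.isLt
  by_cases hleft : (p : ℕ) < m / 2
  · rw [if_pos (by omega), (hg p).1 hleft]
  by_cases hright : m - 1 - (p : ℕ) < m / 2
  · rw [if_neg (by omega), (hg p).2 hright]
  -- `p` is the centre of an odd cycle, the only place left for the label `m - 1`
  set q := g ⟨m - 1, by omega⟩
  have hq : (g.symm q : ℕ) = m - 1 := by simp [q]
  have hqp : q = p := Fin.ext <| by
    have := q.isLt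
    have := (hg q).1
    have := (hg q).2
    omega
  rw [if_pos (by omega), ← hqp, hq]
  omega

theorem _root_.IsGreedy.val_apply {m : ℕ} {g : Equiv.Perm (Fin m)} (hg : IsGreedy g)
    (l : Fin m) : (g l : ℕ) = if (l : ℕ) % 2 = 0 then (l : ℕ) / 2 else m - ((l : ℕ) + 1) / 2 := by
  have h := hg.val_symm_apply_s4 (g l)
  rw [Equiv.symm_apply_apply] at h
  have := (g l).isLt
  split_ifs at h ⊢ <;> omega

variable {m : ℕ} [NeZero m]

theorem val_add_one_eq_ite (p : Fin m) :
    ((p + 1 : Fin m) : ℕ) = if (p : ℕ) + 1 < m then (p : ℕ) + 1 else 0 := by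
  rw [Fin.val_add, Fin.val_one', Nat.add_mod_mod]
  split_ifs with h
  · exact Nat.mod_eq_of_lt h
  · rw [show (p : ℕ) + 1 = m by omega, Nat.mod_self]

theorem val_sub_one_eq_ite (p : Fin m) :
    ((p - 1 : Fin m) : ℕ) = if (p : ℕ) = 0 then m - 1 else (p : ℕ) - 1 := by
  have h := val_add_one_eq_ite (p - 1)
  rw [sub_add_cancel] at h
  have := (p - 1).isLt
  split_ifs at h ⊢ <;> omega

theorem _root_.IsGreedy.neighbours (hm : 3 ≤ m) {g : Equiv.Perm (Fin m)} (hg : IsGreedy g)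
    (l : Fin m) :
    (g.symm (g l - 1) : ℕ) = lowerNeighbour l ∧ (g.symm (g l + 1) : ℕ) = upperNeighbour m l ∨
      (g.symm (g l - 1) : ℕ) = upperNeighbour m l ∧ (g.symm (g l + 1) : ℕ) = lowerNeighbour l := by
  have := l.isLt
  have := hg.val_apply l
  have := val_add_one_eq_ite (g l)
  have := val_sub_one_eq_ite (g l)
  have := hg.val_symm_apply_s4 (g l + 1)
  have := hg.val_symm_apply_s4 (g l - 1)
  unfold lowerNeighbour upperNeighbour
  grind

theorem _root_.IsGreedy.incidenceBound_succ_eq_add_card (hm : 3 ≤ m) {g : Equiv.Perm (Fin m)}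
    (hg : IsGreedy g) (l : Fin m) {j : ℕ} (hj : j ≤ m) :
    incidenceBound m (l + 1) j =
      incidenceBound m l j + #(window (g l - 1) ∩ (below j).image g) := by
  rw [incidenceBound_succ hm l.isLt hj, ← filter_mem_eq_inter, card_filter, sum_window hm,
    sub_add_cancel, show g l - 1 + 2 = g l + 1 by ring]
  simp only [mem_image_below_iff, Equiv.symm_apply_apply]
  rcases hg.neighbours hm l with ⟨h1, h2⟩ | ⟨h1, h2⟩ <;> rw [h1, h2]
  ring

theorem _root_.IsGreedy.incidence_eq_incidenceBound (hm : 3 ≤ m) {g : Equiv.Perm (Fin m)}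
    (hg : IsGreedy g) {t j : ℕ} (ht : t ≤ m) (hj : j ≤ m) :
    incidence ((below t).image (g · - 1)) ((below j).image g) = incidenceBound m t j := by
  rw [incidence, sum_image fun _ _ _ _ h => g.injective (sub_left_inj.mp h), sum_below _ ht]
  induction t with
  | zero => simp [incidenceBound]
  | succ t ih =>
    have hstep := hg.incidenceBound_succ_eq_add_card hm (t : Fin m) hj
    rw [Fin.val_cast_of_lt (by omega)] at hstep
    rw [sum_range_succ, ih (by omega), hstep]

end Greedy

section WindowSum

variable {m : ℕ} [NeZero m]

def windowSum (ρ : Equiv.Perm (Fin m)) (y : Fin m → ℝ) (k : Fin m) : ℝ :=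
  ∑ p ∈ window k, y (ρ.symm p)

theorem sum_windowSum_eq (ρ : Equiv.Perm (Fin m)) (y : Fin m → ℝ) (T : Finset (Fin m)) :
    ∑ k ∈ T, windowSum ρ y k = ∑ l, (incidence T {ρ l} : ℝ) * y l := by
  simp only [windowSum, incidence, card_window_inter_eq_sum, sum_singleton, Nat.cast_sum,
    Nat.cast_ite, Nat.cast_one, Nat.cast_zero, sum_mul, ite_mul, one_mul, zero_mul]
  rw [sum_comm]
  refine sum_congr rfl fun k _ => ?_
  rw [← sum_filter]
  exact sum_equiv ρ.symm (by simp) (by simp)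

theorem sum_below_incidence_singleton (ρ : Equiv.Perm (Fin m)) (T : Finset (Fin m)) (j : ℕ) :
    ∑ l ∈ below j, incidence T {ρ l} = incidence T ((below j).image ρ) := by
  rw [← sum_incidence_singleton, sum_image fun _ _ _ _ h => ρ.injective h]

theorem sum_incidence_singleton_univ (hm : 3 ≤ m) (ρ : Equiv.Perm (Fin m)) (T : Finset (Fin m)) :
    ∑ l, incidence T {ρ l} = 3 * #T := by
  rw [Equiv.sum_comp ρ (fun v => incidence T {v}), sum_incidence_singleton, incidence_univ hm]

theorem sum_windowSum_univ (hm : 3 ≤ m) (ρ : Equiv.Perm (Fin m)) (y : Fin m → ℝ) :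
    ∑ k, windowSum ρ y k = 3 * ∑ l, y l := by
  have hcoef : ∀ v : Fin m, incidence univ {v} = 3 := fun v => by
    rw [incidence_eq_incidence_image_sub_two, image_singleton, incidence_univ hm, card_singleton]
  simp only [sum_windowSum_eq, hcoef, mul_sum, Nat.cast_ofNat]

theorem _root_.IsGreedy.sum_windowSum_le (hm : 3 ≤ m) {g : Equiv.Perm (Fin m)} (hg : IsGreedy g)
    {y : Fin m → ℝ} (hy : Antitone y) (σ : Equiv.Perm (Fin m)) (T : Finset (Fin m)) :
    ∑ k ∈ T, windowSum σ y k ≤ ∑ l ∈ below #T, windowSum g y (g l - 1) := by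
  have hT : #T ≤ m := card_le_univ T |>.trans_eq (Fintype.card_fin m)
  have hinj : Function.Injective (g · - 1) := fun _ _ h => g.injective (sub_left_inj.mp h)
  have hC : #((below #T).image (g · - 1)) = #T := by
    rw [card_image_of_injective _ hinj, card_below hT]
  rw [← sum_image hinj.injOn, sum_windowSum_eq, sum_windowSum_eq]
  refine sum_mul_le_sum_mul_of_prefix_le hy (fun j hj => ?_) ?_
  · simp only [← Nat.cast_sum, sum_below_incidence_singleton, Nat.cast_le]
    calc incidence T ((below j).image σ)
        ≤ incidenceBound m #T j := by
          simpa [card_image_of_injective _ σ.injective, card_below hj] using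
            incidence_le_incidenceBound hm T ((below j).image σ)
      _ = incidence ((below #T).image (g · - 1)) ((below j).image g) :=
          (hg.incidence_eq_incidenceBound hm hT hj).symm
  · simp only [← Nat.cast_sum, sum_incidence_singleton_univ hm, hC]

theorem cyclicP_three_eq_sum_exp (hm : 3 ≤ m) (ρ : Equiv.Perm (Fin m)) {a : Fin m → ℝ}
    (ha : ∀ i, 0 < a i) :
    cyclicP m 3 ρ a = ∑ k, Real.exp (windowSum ρ (fun l => Real.log (a l)) k) := by
  refine sum_congr rfl fun k _ => ?_
  have hmk : ∀ i : ℕ, (⟨((k : ℕ) + i) % m, Nat.mod_lt _ k.pos⟩ : Fin m) = k + (i : Fin m) :=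
    fun i => Fin.ext (by simp [Fin.val_add])
  simp only [windowSum, sum_window hm, Real.exp_add, Real.exp_log (ha _), prod_range_succ,
    prod_range_zero, hmk, Nat.cast_zero, Nat.cast_one, Nat.cast_ofNat, add_zero, one_mul]

end WindowSum

end CyclicWindow

open CyclicWindow in
/-- The greedy permutation maximises the sum of products of triples of cyclically consecutive entries. -/
theorem stmt_4 (m : ℕ) (hm : 3 ≤ m) (a : Fin m → ℝ) (ha : ∀ i, 0 < a i)
    (hdec : Antitone a) (g : Equiv.Perm (Fin m)) (hg : IsGreedy g)
    (σ : Equiv.Perm (Fin m)) :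
    cyclicP m 3 σ a ≤ cyclicP m 3 g a := by
  have : NeZero m := ⟨by omega⟩
  have hy : Antitone fun l => Real.log (a l) := fun i j hij => Real.log_le_log (ha j) (hdec hij)
  rw [cyclicP_three_eq_sum_exp hm σ ha, cyclicP_three_eq_sum_exp hm g ha]
  generalize (fun l => Real.log (a l)) = y at hy ⊢
  obtain ⟨τ, hτ⟩ : ∃ τ : Equiv.Perm (Fin m), Antitone fun i => windowSum σ y (τ i) :=
    ⟨_, fun i j hij => neg_le_neg_iff.mp (Tuple.monotone_sort (fun k => -windowSum σ y k) hij)⟩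
  -- list the windows of `σ` by decreasing sum and those of `g` by the label at their centre
  rw [← Equiv.sum_comp τ (fun k => Real.exp (windowSum σ y k)),
    ← Equiv.sum_comp (g.trans (Equiv.subRight 1)) (fun k => Real.exp (windowSum g y k))]
  refine sum_exp_le_sum_exp_of_prefix_le hτ (fun j hj => ?_) ?_
  · have := hg.sum_windowSum_le hm hy σ ((below j).image τ)
    rw [sum_image τ.injective.injOn, card_image_of_injective _ τ.injective, card_below hj] at this
    simpa only [Equiv.trans_apply, Equiv.subRight_apply] using this
  · rw [Equiv.sum_comp τ (windowSum σ y), Equiv.sum_comp _ (windowSum g y), sum_windowSum_univ hm,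
      sum_windowSum_univ hm]
end

section
/- Let a_0 ≥ a_1 ≥ ... ≥ a_{m-1} > 0 and suppose that for all r ≤ 3 the greedy permutation maximises P_r over all permutations for every decreasing positive vector (of any length). Then for r ∈ {m-3, m-2, m-1, m} the greedy permutation also maximises P_r(·; a): for every permutation σ, P_r(σ_greedy; a) ≥ P_r(σ; a). (Duality via the identity ∏a · P_{m-r}(σ; a⁻¹) = P_r(σ; a) and reversal invariance.) -/
/-!
Every window of length `m` covers the whole circle, so a window of length `r` and the
complementary window of length `m - r` multiply to `∏ a`; hence
`P_r(σ; a) = (∏ a) · P_{m-r}(σ; a⁻¹)`. The vector `a⁻¹` is increasing; read backwards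
(`j ↦ a⁻¹ (rev j)`, which replaces `σ` by `σ ∘ rev`) it is decreasing, so the hypothesis
for `m - r ≤ 3` applies. It remains that the greedy arrangement is reversal invariant:
reversing its values is a rotation of the circle when `m` is even and a reflection when `m`
is odd, and cyclic product sums are invariant under both.
-/

open Finset Fin.NatCast Fin.CommRing

section CyclicProdSum

variable {R : Type*} [CommSemiring R] {m : ℕ} [NeZero m]

def cyclicProdSum (r : ℕ) (f : Fin m → R) : R :=
  ∑ k : Fin m, ∏ i ∈ range r, f (k + i)

theorem cyclicP_eq_cyclicProdSum (r : ℕ) (σ : Equiv.Perm (Fin m)) (a : Fin m → ℝ) :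
    cyclicP m r σ a = cyclicProdSum r (a ∘ σ.symm) := by
  refine sum_congr rfl fun k _ => prod_congr rfl fun i _ => congrArg (a ∘ σ.symm) ?_
  ext
  simp [Fin.add_def, Fin.val_natCast, Nat.add_mod]

theorem cyclicProdSum_comp_add_right (r : ℕ) (f : Fin m → R) (t : Fin m) :
    cyclicProdSum r (fun x => f (x + t)) = cyclicProdSum r f := by
  refine Fintype.sum_equiv (Equiv.addRight t) _ _ fun k => prod_congr rfl fun i _ => ?_
  simp only [Equiv.coe_addRight]
  ring_nf

theorem cyclicProdSum_comp_sub_left (r : ℕ) (f : Fin m → R) (c : Fin m) :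
    cyclicProdSum r (fun x => f (c - x)) = cyclicProdSum r f := by
  refine Fintype.sum_equiv (Equiv.subLeft (c - (r - 1 : ℕ))) _ _ fun k => ?_
  rw [← prod_range_reflect]
  refine prod_congr rfl fun i hi => ?_
  have hri : (r - 1 - i : ℕ) + i = r - 1 := by rw [mem_range] at hi; omega
  have hcast : ((r - 1 - i : ℕ) : Fin m) = (r - 1 : ℕ) - (i : ℕ) :=
    eq_sub_of_add_eq (by rw [← Nat.cast_add, hri])
  simp only [Equiv.subLeft_apply, hcast]
  ring_nf

theorem cyclicProdSum_eq_prod_mul {K : Type*} [Semifield K] {r : ℕ} (hr : r ≤ m)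
    (f : Fin m → K) (hf : ∀ x, f x ≠ 0) :
    cyclicProdSum r f = (∏ x, f x) * cyclicProdSum (m - r) (fun x => (f x)⁻¹) := by
  rw [cyclicProdSum, cyclicProdSum, mul_sum]
  refine Fintype.sum_equiv (Equiv.addRight (r : Fin m)) _ _ fun k => ?_
  have hwindow : ∏ i ∈ range m, f (k + i) = ∏ x, f x := by
    rw [← Fin.prod_univ_eq_prod_range (fun i => f (k + (i : ℕ))),
      ← Equiv.prod_comp (Equiv.addLeft k) f]
    simp [Fin.cast_val_eq_self]
  have hsplit : ∏ i ∈ range m, f (k + i) =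
      (∏ i ∈ range r, f (k + i)) * ∏ i ∈ range (m - r), f (k + (r + i : ℕ)) := by
    rw [← prod_range_add, Nat.add_sub_cancel' hr]
  have hne : ∏ i ∈ range (m - r), f (k + (r + i : ℕ)) ≠ 0 :=
    prod_ne_zero_iff.2 fun i _ => hf _
  have hshift : ∏ i ∈ range (m - r), (f (k + r + i))⁻¹ =
      (∏ i ∈ range (m - r), f (k + (r + i : ℕ)))⁻¹ := by
    simp only [← prod_inv_distrib, Nat.cast_add, add_assoc]
  rw [← hwindow, hsplit, Equiv.coe_addRight, hshift, mul_inv_cancel_right₀ hne]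

end CyclicProdSum

namespace IsGreedy

variable {m : ℕ} {g : Equiv.Perm (Fin m)}

theorem val_symm (hg : IsGreedy g) (i : Fin m) :
    (g.symm i : ℕ) = if (i : ℕ) < m / 2 then 2 * (i : ℕ)
      else if m - 1 - (i : ℕ) < m / 2 then 2 * (m - 1 - (i : ℕ)) + 1 else m - 1 := by
  have hm : 0 < m := i.pos
  obtain ⟨hlow, hhigh⟩ := hg i
  split_ifs with h₁ h₂
  · exact hlow h₁
  · exact hhigh h₂
  -- `i` is the middle of an odd circle; the only position left for it is the last one.
  set p := g ⟨m - 1, by omega⟩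
  have hp : g.symm p = ⟨m - 1, by omega⟩ := g.symm_apply_apply _
  obtain ⟨hplow, hphigh⟩ := hg p
  have hpi : p = i := by
    ext
    by_cases d₁ : (p : ℕ) < m / 2
    · have := hplow d₁; rw [hp] at this; simp only at this; omega
    by_cases d₂ : m - 1 - (p : ℕ) < m / 2
    · have := hphigh d₂; rw [hp] at this; simp only at this; omega
    have := p.isLt; have := i.isLt; omega
  rw [← hpi, hp]

theorem rev_symm_of_even [NeZero m] (hg : IsGreedy g) (he : Even m) (p : Fin m) :
    (g.symm p).rev = g.symm (p + (m / 2 : ℕ)) := by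
  have hm := NeZero.pos m
  have hq := Fin.val_add_eq_ite p ((m / 2 : ℕ) : Fin m)
  rw [Fin.val_cast_of_lt (by omega)] at hq
  ext
  rw [Fin.val_rev, hg.val_symm, hg.val_symm, hq]
  have := p.isLt; have := Nat.even_iff.1 he
  split_ifs <;> omega

theorem rev_symm_of_odd [NeZero m] (hg : IsGreedy g) (ho : Odd m) (p : Fin m) :
    (g.symm p).rev = g.symm (((m - 1) / 2 : ℕ) - p) := by
  have hm := NeZero.pos m
  set c : Fin m := (((m - 1) / 2 : ℕ) : Fin m)
  have hc : (c : ℕ) = (m - 1) / 2 := Fin.val_cast_of_lt (by omega)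
  have hq : ((c - p : Fin m) : ℕ) =
      if (p : ℕ) ≤ c then (c : ℕ) - p else m + (c : ℕ) - p := by
    split_ifs with h
    · exact Fin.coe_sub_iff_le.2 h
    · exact Fin.coe_sub_iff_lt.2 (not_le.1 h)
  rw [hc] at hq
  ext
  rw [Fin.val_rev, hg.val_symm, hg.val_symm, hq]
  have := p.isLt; have := Nat.odd_iff.1 ho
  split_ifs <;> omega

end IsGreedy

theorem cyclicP_eq_prod_mul {m r : ℕ} (hr : r ≤ m) (σ : Equiv.Perm (Fin m)) (a : Fin m → ℝ)
    (ha : ∀ i, a i ≠ 0) :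
    cyclicP m r σ a =
      (∏ i, a i) * cyclicP m (m - r) (Fin.revPerm.trans σ) (fun j => (a j.rev)⁻¹) := by
  rcases m.eq_zero_or_pos with rfl | hm
  · simp [cyclicP]
  have := NeZero.of_pos hm
  rw [cyclicP_eq_cyclicProdSum, cyclicP_eq_cyclicProdSum,
    cyclicProdSum_eq_prod_mul hr (a ∘ σ.symm) fun x => ha _, Function.comp_def,
    Equiv.prod_comp σ.symm a]
  simp [Function.comp_def]

theorem IsGreedy.cyclicP_revPerm_trans {m : ℕ} {g : Equiv.Perm (Fin m)} (hg : IsGreedy g)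
    (r : ℕ) (b : Fin m → ℝ) :
    cyclicP m r (Fin.revPerm.trans g) b = cyclicP m r g b := by
  rcases m.eq_zero_or_pos with rfl | hm
  · simp [cyclicP]
  have := NeZero.of_pos hm
  rw [cyclicP_eq_cyclicProdSum, cyclicP_eq_cyclicProdSum]
  rcases Nat.even_or_odd m with he | ho
  · refine Eq.trans ?_ (cyclicProdSum_comp_add_right r (b ∘ g.symm) ((m / 2 : ℕ) : Fin m))
    simp [Function.comp_def, hg.rev_symm_of_even he]
  · refine Eq.trans ?_ (cyclicProdSum_comp_sub_left r (b ∘ g.symm) (((m - 1) / 2 : ℕ) : Fin m))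
    simp [Function.comp_def, hg.rev_symm_of_odd ho]

theorem stmt_5_general
    (H : ∀ (n : ℕ) (b : Fin n → ℝ), (∀ i, 0 < b i) → Antitone b →
      ∀ r : ℕ, r ≤ 3 → ∀ g σ : Equiv.Perm (Fin n), IsGreedy g →
        cyclicP n r σ b ≤ cyclicP n r g b)
    (m : ℕ) (a : Fin m → ℝ) (ha : ∀ i, 0 < a i) (hdec : Antitone a)
    (r : ℕ) (hr1 : m - 3 ≤ r) (hr2 : r ≤ m)
    (g σ : Equiv.Perm (Fin m)) (hg : IsGreedy g) :
    cyclicP m r σ a ≤ cyclicP m r g a := by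
  have ha₀ : ∀ i, a i ≠ 0 := fun i => (ha i).ne'
  rw [cyclicP_eq_prod_mul hr2 σ a ha₀, cyclicP_eq_prod_mul hr2 g a ha₀,
    hg.cyclicP_revPerm_trans]
  have hb_anti : Antitone fun j : Fin m => (a j.rev)⁻¹ :=
    fun i j hij => inv_anti₀ (ha _) (hdec (Fin.rev_le_rev.2 hij))
  exact mul_le_mul_of_nonneg_left
    (H m _ (fun i => inv_pos.2 (ha _)) hb_anti (m - r) (by omega) g _ hg)
    (prod_pos fun i _ => ha i).le

/-- If the greedy permutation maximises `P_r` for all `r ≤ 3` (for every length and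
every decreasing positive vector), then it also maximises `P_r` for `m-3 ≤ r ≤ m`. -/
theorem stmt_5
    (H : ∀ (n : ℕ) (b : Fin n → ℝ), (∀ i, 0 < b i) → Antitone b →
      ∀ r : ℕ, r ≤ 3 → ∀ g σ : Equiv.Perm (Fin n), IsGreedy g →
        cyclicP n r σ b ≤ cyclicP n r g b)
    (m : ℕ) (hm : 4 ≤ m) (a : Fin m → ℝ) (ha : ∀ i, 0 < a i) (hdec : Antitone a)
    (r : ℕ) (hr1 : m - 3 ≤ r) (hr2 : r ≤ m)
    (g σ : Equiv.Perm (Fin m)) (hg : IsGreedy g) :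
    cyclicP m r σ a ≤ cyclicP m r g a :=
  stmt_5_general H m a ha hdec r hr1 hr2 g σ hg
end

section
/- Define the velocity functional v(p) = (1 - γ) / (1 - γ + (2/m)·∑_{r=1}^{m} P_r(I; ρ)) as above. Then v is invariant under reversal of the vector p: v(p ∘ τ) = v(p), where τ(i) = (m - 1 - i) (reversal of order). -/
/-- The velocity functional
`v(p) = (1 - γ)/(1 - γ + (2/m) ∑_{r=1}^{m} P_r(I; ρ))` where `ρᵢ = (1 - pᵢ)/pᵢ`
and `γ = ∏ᵢ ρᵢ`. -/
noncomputable def vel (m : ℕ) (p : Fin m → ℝ) : ℝ :=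
  (1 - ∏ i, (1 - p i) / p i) /
    (1 - (∏ i, (1 - p i) / p i) +
      (2 / (m : ℝ)) * ∑ r ∈ Finset.Icc 1 m, cyclicP m r 1 (fun i => (1 - p i) / p i))

open Finset Fin.CommRing

theorem sum_prod_window_reflect {G R : Type*} [AddCommGroupWithOne G] [Fintype G] [CommSemiring R]
    (a : G → R) (c : G) (r : ℕ) :
    ∑ k, ∏ i ∈ range r, a (c - (k + i)) = ∑ k, ∏ i ∈ range r, a (k + i) := by
  have window_reflect (k : G) :
      ∏ i ∈ range r, a (c - (k + i)) = ∏ i ∈ range r, a (c - (r - 1) - k + i) := by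
    rw [← prod_range_reflect]
    refine prod_congr rfl fun i hi => ?_
    rw [Nat.cast_sub (by grind), Nat.cast_sub (by grind), Nat.cast_one]
    congr 1
    abel
  simp only [window_reflect]
  exact Fintype.sum_equiv (Equiv.subLeft (c - (r - 1))) _ _ fun _ => rfl

theorem cyclicP_one_eq_sum_prod_add {m : ℕ} [NeZero m] (r : ℕ) (a : Fin m → ℝ) :
    cyclicP m r 1 a = ∑ k, ∏ i ∈ range r, a (k + i) := by
  refine sum_congr rfl fun k _ => prod_congr rfl fun i _ => congrArg a (Fin.ext ?_)
  simp [Fin.val_add, Fin.val_natCast, Equiv.Perm.one_def]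

theorem cyclicP_one_comp_rev (m r : ℕ) (a : Fin m → ℝ) :
    cyclicP m r 1 (a ∘ Fin.rev) = cyclicP m r 1 a := by
  obtain _ | n := m
  · simp [cyclicP]
  simp only [cyclicP_one_eq_sum_prod_add, Function.comp_apply, ← Fin.last_sub]
  exact sum_prod_window_reflect a (Fin.last n) r

theorem vel_comp_rev (m : ℕ) (p : Fin m → ℝ) : vel m (p ∘ Fin.rev) = vel m p := by
  have hρ : (fun i => (1 - (p ∘ Fin.rev) i) / (p ∘ Fin.rev) i) =
      (fun i => (1 - p i) / p i) ∘ Fin.rev := rfl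
  have hγ : ∏ i, ((fun i => (1 - p i) / p i) ∘ Fin.rev) i = ∏ i, (1 - p i) / p i :=
    Equiv.prod_comp Fin.revPerm fun i => (1 - p i) / p i
  simp only [vel, hρ, hγ, cyclicP_one_comp_rev]

theorem stmt_10_general (m : ℕ) (p : Fin m → ℝ) (τ : Equiv.Perm (Fin m))
    (hτ : ∀ i : Fin m, ((τ i : ℕ)) = m - 1 - (i : ℕ)) :
    vel m (p ∘ τ) = vel m p := by
  have hτ_rev : ⇑τ = Fin.rev := funext fun i => Fin.ext (by rw [hτ, Fin.val_rev]; omega)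
  rw [hτ_rev, vel_comp_rev]

/-- The velocity is invariant under reversal of the vector `p`. -/
theorem stmt_10 (m : ℕ) (hm : 1 ≤ m) (p : Fin m → ℝ) (hp : ∀ i, 0 < p i ∧ p i < 1)
    (hγ : (∏ i, (1 - p i) / p i) < 1) (τ : Equiv.Perm (Fin m))
    (hτ : ∀ i : Fin m, ((τ i : ℕ)) = m - 1 - (i : ℕ)) :
    vel m (p ∘ τ) = vel m p :=
  stmt_10_general m p τ hτ
end

section
/- The velocity functional v(p) = (1 - γ)/(1 - γ + (2/m)∑_{r=1}^{m} P_r(I;ρ)) is strictly increasing in each coordinate p_i on the region where γ(p) < 1: if p' agrees with p except p'_j > p_j, and both have γ < 1, then v(p') > v(p). -/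
/-!
Raising `p_j` lowers `ρ_j` and leaves the other `ρ_i` unchanged. Hence `γ` strictly decreases,
while the cyclic product sums, being monotone in `ρ ≥ 0`, do not increase. Since
`v = u / (u + w)` with `u = 1 - γ > 0` and `w = (2/m) ∑ P_r > 0`, and `u / (u + w)` is strictly
increasing in `u` and antitone in `w`, `v` strictly increases.
-/

open Finset

lemma div_add_lt_div_add {u u' w w' : ℝ} (hu : 0 < u) (huu' : u < u') (hw : 0 < w)
    (hw' : 0 ≤ w') (hww' : w' ≤ w) : u / (u + w) < u' / (u' + w') := by
  rw [div_lt_div_iff₀ (by linarith) (by linarith)]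
  nlinarith [mul_le_mul_of_nonneg_left hww' hu.le, mul_lt_mul_of_pos_right huu' hw]

lemma one_sub_div_self_strictAntiOn : StrictAntiOn (fun x : ℝ => (1 - x) / x) (Set.Ioi 0) := by
  intro a ha b hb hab
  simp only [Set.mem_Ioi] at ha hb
  rw [div_lt_div_iff₀ hb ha]
  nlinarith

lemma cyclicP_mono {m r : ℕ} (σ : Equiv.Perm (Fin m)) {a b : Fin m → ℝ} (ha : 0 ≤ a)
    (hab : a ≤ b) : cyclicP m r σ a ≤ cyclicP m r σ b :=
  sum_le_sum fun _ _ => prod_le_prod (fun _ _ => ha _) fun _ _ => hab _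

lemma cyclicP_pos {m : ℕ} (hm : 0 < m) (r : ℕ) (σ : Equiv.Perm (Fin m)) {a : Fin m → ℝ}
    (ha : ∀ i, 0 < a i) : 0 < cyclicP m r σ a :=
  sum_pos (fun _ _ => prod_pos fun _ _ => ha _) ⟨⟨0, hm⟩, mem_univ _⟩

theorem stmt_11_general (m : ℕ) (p p' : Fin m → ℝ)
    (hp : ∀ i, 0 < p i ∧ p i < 1) (hp' : ∀ i, 0 < p' i ∧ p' i < 1)
    (hγ : (∏ i, (1 - p i) / p i) < 1)
    (j : Fin m) (hne : ∀ i, i ≠ j → p' i = p i) (hj : p j < p' j) :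
    vel m p < vel m p' := by
  set ρ : Fin m → ℝ := fun i => (1 - p i) / p i
  set ρ' : Fin m → ℝ := fun i => (1 - p' i) / p' i
  have hρ_pos (i : Fin m) : 0 < ρ i := div_pos (by linarith [hp i]) (hp i).1
  have hρ'_pos (i : Fin m) : 0 < ρ' i := div_pos (by linarith [hp' i]) (hp' i).1
  have hρ'_lt : ρ' j < ρ j := one_sub_div_self_strictAntiOn (hp j).1 (hp' j).1 hj
  have hρ'_le : ρ' ≤ ρ := fun i => by
    rcases eq_or_ne i j with rfl | hi
    · exact hρ'_lt.le
    · simp only [ρ, ρ', hne i hi, le_refl]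
  have hγ_lt : ∏ i, ρ' i < ∏ i, ρ i :=
    prod_lt_prod (fun i _ => hρ'_pos i) (fun i _ => hρ'_le i) ⟨j, mem_univ j, hρ'_lt⟩
  have hS_pos (a : Fin m → ℝ) (ha : ∀ i, 0 < a i) :
      0 < (2 / (m : ℝ)) * ∑ r ∈ Icc 1 m, cyclicP m r 1 a := by
    have hm : 0 < m := j.pos
    have := sum_pos (fun r _ => cyclicP_pos hm r 1 ha) (nonempty_Icc.2 hm)
    positivity
  have hS_le : (2 / (m : ℝ)) * ∑ r ∈ Icc 1 m, cyclicP m r 1 ρ'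
      ≤ (2 / (m : ℝ)) * ∑ r ∈ Icc 1 m, cyclicP m r 1 ρ :=
    mul_le_mul_of_nonneg_left
      (sum_le_sum fun r _ => cyclicP_mono 1 (fun i => (hρ'_pos i).le) hρ'_le) (by positivity)
  exact div_add_lt_div_add (sub_pos.2 hγ) (by linarith) (hS_pos ρ hρ_pos)
    (hS_pos ρ' hρ'_pos).le hS_le

/-- The velocity is strictly increasing in each coordinate `pⱼ` on the region `γ < 1`. -/
theorem stmt_11 (m : ℕ) (hm : 1 ≤ m) (p p' : Fin m → ℝ)
    (hp : ∀ i, 0 < p i ∧ p i < 1) (hp' : ∀ i, 0 < p' i ∧ p' i < 1)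
    (hγ : (∏ i, (1 - p i) / p i) < 1) (hγ' : (∏ i, (1 - p' i) / p' i) < 1)
    (j : Fin m) (hne : ∀ i, i ≠ j → p' i = p i) (hj : p j < p' j) :
    vel m p < vel m p' :=
  stmt_11_general m p p' hp hp' hγ j hne hj
end

section
/- Multi-point Steinhaus theorem: if E ⊆ ℝ^d has positive Lebesgue measure, then for every n ∈ ℕ there exists δ > 0 such that for all y_1,...,y_n ∈ ℝ^d with |y_i| < δ for each i, the set E_{y_1,...,y_n} is non-empty, where E_y = E ∩ (E + y) and E_{y_1,...,y_{k+1}} = (E_{y_1,...,y_k})_{y_{k+1}}. -/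
/-!
Unfolding the recursion, `E_{y₁,…,yₙ}` is the intersection of the `2ⁿ` translates `E + σ`,
where `σ` runs over the sums of sub-families of the `yᵢ`. If all `‖yᵢ‖ < δ` then all `‖σ‖ < nδ`,
so it suffices to intersect boundedly many translates of `E` by small vectors. Pick a compact
`K ⊆ E` of positive measure; translation is continuous in measure, so `μ (K \ (v + K)) < μ K / N`
for `v` near `0`, and a union bound shows that `N` such translates of `K` still meet `K`.
-/

open MeasureTheory

/-- Iterated Steinhaus intersections: `E_[] = E` and
`E_(y :: ys) = E_ys ∩ (E_ys + y)` (so the list `[y₁, …, yₙ]` is processed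
with `y₁` first via `foldl`). -/
def iterSet {d : ℕ} (E : Set (EuclideanSpace ℝ (Fin d)))
    (L : List (EuclideanSpace ℝ (Fin d))) : Set (EuclideanSpace ℝ (Fin d)) :=
  L.foldl (fun F y => F ∩ ((fun z => z + y) '' F)) E

open Filter Topology Pointwise

theorem List.norm_sum_le_length_mul {E : Type*} [SeminormedAddGroup E] {l : List E} {C : ℝ}
    (h : ∀ y ∈ l, ‖y‖ ≤ C) : ‖l.sum‖ ≤ l.length * C := by
  refine (l.le_sum_of_subadditive norm norm_zero.le norm_add_le).trans ?_
  simpa using List.sum_le_card_nsmul (l.map norm) C (by simpa using h)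

theorem List.norm_sum_lt_of_sublist {E : Type*} [SeminormedAddGroup E] {l L : List E}
    (hl : l.Sublist L) {r : ℝ} (hr : 0 < r) (hL : ∀ y ∈ L, ‖y‖ < r / (L.length + 1)) :
    ‖l.sum‖ < r := calc
  ‖l.sum‖ ≤ l.length * (r / (L.length + 1)) :=
    List.norm_sum_le_length_mul fun y hy => (hL y (hl.subset hy)).le
  _ ≤ L.length * (r / (L.length + 1)) := by gcongr; exact hl.length_le
  _ < r := by
    rw [mul_div_assoc', div_lt_iff₀ (by positivity)]
    linarith

theorem MeasureTheory.Measure.nonempty_inter_biInter_of_sum_measure_sdiff_lt {α ι : Type*}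
    [MeasurableSpace α] (μ : Measure α) {K : Set α} (s : Finset ι) (A : ι → Set α)
    (h : ∑ i ∈ s, μ (K \ A i) < μ K) : (K ∩ ⋂ i ∈ s, A i).Nonempty := by
  by_contra hempty
  have hcover : K ⊆ ⋃ i ∈ s, K \ A i := by
    intro x hx
    by_contra hx'
    simp only [Set.mem_iUnion₂, Set.mem_sdiff, not_exists, not_and, not_not] at hx'
    exact hempty ⟨x, hx, Set.mem_iInter₂.2 fun i hi => hx' i hi hx⟩
  exact ((measure_mono hcover).trans (measure_biUnion_finset_le s _)).not_gt h

theorem MeasureTheory.Measure.exists_nhds_zero_forall_finset_biInter_vadd_nonempty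
    {G : Type*} [AddGroup G] [TopologicalSpace G] [IsTopologicalAddGroup G]
    [LocallyCompactSpace G] [MeasurableSpace G] [BorelSpace G]
    (μ : Measure G) [IsAddHaarMeasure μ] [InnerRegular μ]
    {E : Set G} (hE : MeasurableSet E) (hEpos : 0 < μ E) (N : ℕ) :
    ∃ U ∈ 𝓝 (0 : G), ∀ s : Finset G, s.card ≤ N → (s : Set G) ⊆ U →
      (⋂ v ∈ s, v +ᵥ E).Nonempty := by
  obtain ⟨K, hKE, hK, hKclosed, hKpos⟩ : ∃ K ⊆ E, IsCompact K ∧ IsClosed K ∧ 0 < μ K := by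
    obtain ⟨K, hKE, hK, hKpos⟩ := hE.exists_lt_isCompact hEpos
    exact ⟨closure K, hK.closure_subset_measurableSet hE hKE, hK.closure, isClosed_closure,
      by rwa [hK.measure_closure]⟩
  obtain ⟨ε, hεpos, hεN⟩ := ENNReal.exists_pos_mul_lt (ENNReal.natCast_ne_top N) hKpos.ne'
  refine ⟨-{g | μ ((g +ᵥ K) \ K) < ε}, neg_mem_nhds_zero _
    (eventually_nhds_zero_measure_vadd_sdiff_lt (μ := μ) hK hKclosed hεpos.ne'),
    fun s hsN hsU => ?_⟩
  have hsmall : ∀ v ∈ s, μ (K \ (v +ᵥ K)) ≤ ε := fun v hv => by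
    rw [← measure_vadd μ (-v), Set.vadd_set_sdiff, neg_vadd_vadd]
    exact (Set.mem_neg.1 (hsU hv)).le
  have hsum : ∑ v ∈ s, μ (K \ (v +ᵥ K)) < μ K := calc
    ∑ v ∈ s, μ (K \ (v +ᵥ K)) ≤ s.card * ε := by
      simpa using Finset.sum_le_card_nsmul s _ ε hsmall
    _ ≤ N * ε := by gcongr
    _ < μ K := by rwa [mul_comm]
  refine (μ.nonempty_inter_biInter_of_sum_measure_sdiff_lt s _ hsum).mono ?_
  exact Set.inter_subset_right.trans (Set.biInter_mono subset_rfl fun v _ => Set.vadd_set_mono hKE)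

theorem mem_iterSet_iff {d : ℕ} {E : Set (EuclideanSpace ℝ (Fin d))}
    {L : List (EuclideanSpace ℝ (Fin d))} {x : EuclideanSpace ℝ (Fin d)} :
    x ∈ iterSet E L ↔ ∀ l : List (EuclideanSpace ℝ (Fin d)), l.Sublist L → x - l.sum ∈ E := by
  induction L generalizing E with
  | nil => simp [iterSet]
  | cons y L ih =>
    change x ∈ iterSet (E ∩ _) L ↔ _
    simp only [ih, Set.image_add_right, Set.mem_inter_iff, Set.mem_preimage, forall_and,
      List.sublist_cons_iff, or_imp, forall_exists_index, and_imp]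
    rw [forall_comm (α := List _)]
    simp [← sub_eq_add_neg, sub_sub, add_comm]

/-- Multi-point Steinhaus theorem: if `E ⊆ ℝ^d` has positive Lebesgue measure then for
every `n` there is `δ > 0` such that whenever `‖yᵢ‖ < δ` for `i = 1,…,n`, the set
`E_{y₁,…,yₙ}` is non-empty. -/
theorem stmt_14 (d n : ℕ) (E : Set (EuclideanSpace ℝ (Fin d)))
    (hE : MeasurableSet E) (hpos : 0 < volume E) :
    ∃ δ > (0 : ℝ), ∀ L : List (EuclideanSpace ℝ (Fin d)), L.length = n →
      (∀ y ∈ L, ‖y‖ < δ) → (iterSet E L).Nonempty := by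
  obtain ⟨U, hU, hUne⟩ :=
    volume.exists_nhds_zero_forall_finset_biInter_vadd_nonempty hE hpos (2 ^ n)
  obtain ⟨r, hr, hrU⟩ := Metric.mem_nhds_iff.1 hU
  refine ⟨r / (n + 1), by positivity, fun L hlen hL => ?_⟩
  subst hlen
  set sums := (L.sublists.map List.sum).toFinset
  have hcard : sums.card ≤ 2 ^ L.length := (List.toFinset_card_le _).trans (by simp)
  have hsumsU : (sums : Set _) ⊆ U := by
    intro v hv
    obtain ⟨l, hl, rfl⟩ : ∃ l : List (EuclideanSpace ℝ (Fin d)), l.Sublist L ∧ l.sum = v := by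
      simpa [sums] using hv
    exact hrU (mem_ball_zero_iff.2 (List.norm_sum_lt_of_sublist hl hr hL))
  obtain ⟨x, hx⟩ := hUne sums hcard hsumsU
  refine ⟨x, mem_iterSet_iff.2 fun l hl => ?_⟩
  have hxl := Set.mem_iInter₂.1 hx l.sum (by simpa [sums] using ⟨l, hl, rfl⟩)
  rwa [Set.mem_vadd_set_iff_neg_vadd_mem, vadd_eq_add, neg_add_eq_sub] at hxl
end
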